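/- If K is algebraically closed of characteristic different from 2, then there exists a nonzero a' ∈ K with A^{k,s}(a,c) ≅ A^{k,s}(a',0) as K-algebras; if moreover (k,s) ≠ (1,3), then A^{k,s}(a,c) ≅ A^{k,s}(1,0). -/
import Mathlib


namespace QT

/-- The generators of the free algebra: the two vertex idempotents `e1, e2`,
the loops `al` (α at vertex 1) and `et` (η at vertex 2), and the arrows
`be` (β : 1 → 2) and `ga` (γ : 2 → 1). -/
inductive Gen : Type
  | e1 : Gen
  | e2 : Gen
  | al : Gen
  | be : Gen
  | ga : Gen
  | et : Gen

open Gen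

/-- Generators as elements of the free algebra. -/
noncomputable def gen (K : Type) [Field K] (g : Gen) : FreeAlgebra K Gen :=
  FreeAlgebra.ι K g

/-- The defining relations of the algebra `A^{k,s}(a,c)`: the path-algebra
relations for the quiver with two vertices, loops α, η and arrows β, γ
(paths composed left to right), together with the relations
βη = (αβγ)^{k−1}αβ, ηγ = (γαβ)^{k−1}γα, α² = a(βγα)^{k−1}βγ + c(βγα)^k,
γβ = η^{s−1}, α²β = 0, γα² = 0. -/
inductive Rel (K : Type) [Field K] (k s : ℕ) (a c : K) :
    FreeAlgebra K Gen → FreeAlgebra K Gen → Prop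
  | idem1 : Rel K k s a c (gen K e1 * gen K e1) (gen K e1)
  | idem2 : Rel K k s a c (gen K e2 * gen K e2) (gen K e2)
  | orth12 : Rel K k s a c (gen K e1 * gen K e2) 0
  | orth21 : Rel K k s a c (gen K e2 * gen K e1) 0
  | sum_idem : Rel K k s a c (gen K e1 + gen K e2) 1
  | al_left : Rel K k s a c (gen K e1 * gen K al) (gen K al)
  | al_right : Rel K k s a c (gen K al * gen K e1) (gen K al)
  | be_left : Rel K k s a c (gen K e1 * gen K be) (gen K be)
  | be_right : Rel K k s a c (gen K be * gen K e2) (gen K be)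
  | ga_left : Rel K k s a c (gen K e2 * gen K ga) (gen K ga)
  | ga_right : Rel K k s a c (gen K ga * gen K e1) (gen K ga)
  | et_left : Rel K k s a c (gen K e2 * gen K et) (gen K et)
  | et_right : Rel K k s a c (gen K et * gen K e2) (gen K et)
  | rel_beta_eta : Rel K k s a c (gen K be * gen K et)
      ((gen K al * gen K be * gen K ga) ^ (k - 1) * (gen K al * gen K be))
  | rel_eta_gamma : Rel K k s a c (gen K et * gen K ga)
      ((gen K ga * gen K al * gen K be) ^ (k - 1) * (gen K ga * gen K al))
  | rel_alpha_sq : Rel K k s a c (gen K al * gen K al)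
      (a • ((gen K be * gen K ga * gen K al) ^ (k - 1) * (gen K be * gen K ga)) +
        c • (gen K be * gen K ga * gen K al) ^ k)
  | rel_gamma_beta : Rel K k s a c (gen K ga * gen K be) ((gen K et) ^ (s - 1))
  | rel_alpha_sq_beta : Rel K k s a c (gen K al * gen K al * gen K be) 0
  | rel_gamma_alpha_sq : Rel K k s a c (gen K ga * (gen K al * gen K al)) 0

/-- The algebra `A^{k,s}(a,c)` of quaternion type with two simple modules. -/
abbrev Aa (K : Type) [Field K] (k s : ℕ) (a c : K) : Type :=
  RingQuot (Rel K k s a c)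

variable (K : Type) [Field K] (k s : ℕ) (a c : K)

/-- The idempotent e₁ in `A^{k,s}(a,c)`. -/
noncomputable def E1 : Aa K k s a c := RingQuot.mkAlgHom K (Rel K k s a c) (gen K e1)
/-- The idempotent e₂ in `A^{k,s}(a,c)`. -/
noncomputable def E2 : Aa K k s a c := RingQuot.mkAlgHom K (Rel K k s a c) (gen K e2)
/-- The loop α in `A^{k,s}(a,c)`. -/
noncomputable def Al : Aa K k s a c := RingQuot.mkAlgHom K (Rel K k s a c) (gen K al)
/-- The arrow β in `A^{k,s}(a,c)`. -/
noncomputable def Be : Aa K k s a c := RingQuot.mkAlgHom K (Rel K k s a c) (gen K be)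
/-- The arrow γ in `A^{k,s}(a,c)`. -/
noncomputable def Ga : Aa K k s a c := RingQuot.mkAlgHom K (Rel K k s a c) (gen K ga)
/-- The loop η in `A^{k,s}(a,c)`. -/
noncomputable def Et : Aa K k s a c := RingQuot.mkAlgHom K (Rel K k s a c) (gen K et)

/-- The commutator subspace [A,A]: the K-subspace spanned by all commutators. -/
noncomputable def comm : Submodule K (Aa K k s a c) :=
  Submodule.span K {z : Aa K k s a c | ∃ u v : Aa K k s a c, z = u * v - v * u}

/-- Index type for the basis B = B₁ ∪ B₂ ∪ B₃ ∪ B₄ of `A^{k,s}(a,c)`. -/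
abbrev BIdx (k s : ℕ) : Type :=
  ((Fin k ⊕ Fin k) ⊕ (Fin (k - 1) ⊕ Fin (k + 1))) ⊕
    ((Fin (s + 1) ⊕ Fin (k - 1)) ⊕ ((Fin k ⊕ Fin k) ⊕ (Fin k ⊕ Fin k)))

/-- The family of elements of `A^{k,s}(a,c)` given by
B₁ = {α(βγα)^n, (βγα)^nβγ : 0 ≤ n ≤ k−1} ∪ {(βγα)^m : 1 ≤ m ≤ k−1} ∪ {(αβγ)^ℓ : 0 ≤ ℓ ≤ k},
B₂ = {η^t : 0 ≤ t ≤ s} ∪ {(γαβ)^m : 1 ≤ m ≤ k−1},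
B₃ = {(βγα)^nβ, α(βγα)^nβ : 0 ≤ n ≤ k−1},
B₄ = {(γαβ)^nγ, (γαβ)^nγα : 0 ≤ n ≤ k−1}. -/
noncomputable def bVec : BIdx k s → Aa K k s a c := fun i =>
  let α := Al K k s a c
  let β := Be K k s a c
  let γ := Ga K k s a c
  let η := Et K k s a c
  match i with
  | .inl (.inl (.inl n)) => α * (β * γ * α) ^ (n : ℕ)
  | .inl (.inl (.inr n)) => (β * γ * α) ^ (n : ℕ) * (β * γ)
  | .inl (.inr (.inl m)) => (β * γ * α) ^ ((m : ℕ) + 1)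
  | .inl (.inr (.inr l)) => (α * β * γ) ^ (l : ℕ)
  | .inr (.inl (.inl t)) => η ^ (t : ℕ)
  | .inr (.inl (.inr m)) => (γ * α * β) ^ ((m : ℕ) + 1)
  | .inr (.inr (.inl (.inl n))) => (β * γ * α) ^ (n : ℕ) * β
  | .inr (.inr (.inl (.inr n))) => α * (β * γ * α) ^ (n : ℕ) * β
  | .inr (.inr (.inr (.inl n))) => (γ * α * β) ^ (n : ℕ) * γ
  | .inr (.inr (.inr (.inr n))) => (γ * α * β) ^ (n : ℕ) * (γ * α)

/-- `ψ` is the linear form on `A^{k,s}(a,c)` sending η^s and (αβγ)^k to 1 and every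
other element of the basis B to 0. -/
noncomputable def IsPsi (ψ : Aa K k s a c →ₗ[K] K) : Prop :=
  ψ ((Et K k s a c) ^ s) = 1 ∧
  ψ ((Al K k s a c * Be K k s a c * Ga K k s a c) ^ k) = 1 ∧
  ∀ i : BIdx k s, bVec K k s a c i ≠ (Et K k s a c) ^ s →
    bVec K k s a c i ≠ (Al K k s a c * Be K k s a c * Ga K k s a c) ^ k →
    ψ (bVec K k s a c i) = 0

/-- The set T₁(A) = {x ∈ A : x² ∈ [A,A]} (characteristic 2). -/
noncomputable def T1 : Set (Aa K k s a c) :=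
  {z : Aa K k s a c | z ^ 2 ∈ comm K k s a c}

/-- The orthogonal space T₁(A)^⊥ of T₁(A) with respect to the symmetrising form
⟨u,v⟩ = ψ(uv): the space of all z with ψ(z·m) = 0 for all m ∈ T₁(A). -/
noncomputable def perp (ψ : Aa K k s a c →ₗ[K] K) : Submodule K (Aa K k s a c) :=
  ⨅ m ∈ T1 K k s a c, LinearMap.ker (ψ ∘ₗ LinearMap.mulRight K m)

end QT


namespace QT
open Gen

theorem shuttle {M : Type*} [Monoid M] (x y : M) (n : ℕ) :
    x * (y * x) ^ n = (x * y) ^ n * x := by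
  induction n with
  | zero => simp
  | succ n ih =>
    rw [pow_succ, ← mul_assoc, ih, pow_succ]
    simp only [mul_assoc]

section Derived

variable {K : Type} [Field K] {k s : ℕ} {a c : K}

local notation "α" => Al K k s a c
local notation "β" => Be K k s a c
local notation "γ" => Ga K k s a c
local notation "η" => Et K k s a c
local notation "ε₁" => E1 K k s a c
local notation "ε₂" => E2 K k s a c
local notation "Ω" => (Be K k s a c * Ga K k s a c * Al K k s a c) ^ (k - 1) *
  (Be K k s a c * Ga K k s a c)
local notation "Zl" => (Be K k s a c * Ga K k s a c * Al K k s a c) ^ k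

private theorem req {x y : FreeAlgebra K Gen} (h : Rel K k s a c x y) :
    RingQuot.mkAlgHom K (Rel K k s a c) x = RingQuot.mkAlgHom K (Rel K k s a c) y :=
  RingQuot.mkAlgHom_rel K h

theorem r11 : ε₁ * ε₁ = ε₁ := by
  simpa only [map_mul, E1] using req (Rel.idem1 (K := K) (k := k) (s := s) (a := a) (c := c))

theorem r22 : ε₂ * ε₂ = ε₂ := by
  simpa only [map_mul, E2] using req (Rel.idem2 (K := K) (k := k) (s := s) (a := a) (c := c))

theorem r12 : ε₁ * ε₂ = 0 := by
  simpa only [map_mul, map_zero, E1, E2] using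
    req (Rel.orth12 (K := K) (k := k) (s := s) (a := a) (c := c))

theorem r21 : ε₂ * ε₁ = 0 := by
  simpa only [map_mul, map_zero, E1, E2] using
    req (Rel.orth21 (K := K) (k := k) (s := s) (a := a) (c := c))

theorem rSum : ε₁ + ε₂ = 1 := by
  simpa only [map_add, map_one, E1, E2] using
    req (Rel.sum_idem (K := K) (k := k) (s := s) (a := a) (c := c))

theorem rE1A : ε₁ * α = α := by
  simpa only [map_mul, E1, Al] using
    req (Rel.al_left (K := K) (k := k) (s := s) (a := a) (c := c))

theorem rAE1 : α * ε₁ = α := by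
  simpa only [map_mul, E1, Al] using
    req (Rel.al_right (K := K) (k := k) (s := s) (a := a) (c := c))

theorem rE1B : ε₁ * β = β := by
  simpa only [map_mul, E1, Be] using
    req (Rel.be_left (K := K) (k := k) (s := s) (a := a) (c := c))

theorem rBE2 : β * ε₂ = β := by
  simpa only [map_mul, E2, Be] using
    req (Rel.be_right (K := K) (k := k) (s := s) (a := a) (c := c))

theorem rE2G : ε₂ * γ = γ := by
  simpa only [map_mul, E2, Ga] using
    req (Rel.ga_left (K := K) (k := k) (s := s) (a := a) (c := c))

theorem rGE1 : γ * ε₁ = γ := by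
  simpa only [map_mul, E1, Ga] using
    req (Rel.ga_right (K := K) (k := k) (s := s) (a := a) (c := c))

theorem rE2E : ε₂ * η = η := by
  simpa only [map_mul, E2, Et] using
    req (Rel.et_left (K := K) (k := k) (s := s) (a := a) (c := c))

theorem rEE2 : η * ε₂ = η := by
  simpa only [map_mul, E2, Et] using
    req (Rel.et_right (K := K) (k := k) (s := s) (a := a) (c := c))

theorem rBE : β * η = (α * β * γ) ^ (k - 1) * (α * β) := by
  simpa only [map_mul, map_pow, Al, Be, Ga, Et] using
    req (Rel.rel_beta_eta (K := K) (k := k) (s := s) (a := a) (c := c))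

theorem rEG : η * γ = (γ * α * β) ^ (k - 1) * (γ * α) := by
  simpa only [map_mul, map_pow, Al, Be, Ga, Et] using
    req (Rel.rel_eta_gamma (K := K) (k := k) (s := s) (a := a) (c := c))

theorem rAA : α * α = a • Ω + c • Zl := by
  simpa only [map_mul, map_pow, map_add, map_smul, Al, Be, Ga] using
    req (Rel.rel_alpha_sq (K := K) (k := k) (s := s) (a := a) (c := c))

theorem rGB : γ * β = η ^ (s - 1) := by
  simpa only [map_mul, map_pow, Be, Ga, Et] using
    req (Rel.rel_gamma_beta (K := K) (k := k) (s := s) (a := a) (c := c))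

theorem rAAB : α * α * β = 0 := by
  simpa only [map_mul, map_zero, Al, Be] using
    req (Rel.rel_alpha_sq_beta (K := K) (k := k) (s := s) (a := a) (c := c))

theorem rGAA : γ * (α * α) = 0 := by
  simpa only [map_mul, map_zero, Al, Ga] using
    req (Rel.rel_gamma_alpha_sq (K := K) (k := k) (s := s) (a := a) (c := c))

theorem zT1 (t : Aa K k s a c) : α * (α * (β * t)) = 0 := by
  rw [← mul_assoc, ← mul_assoc, rAAB, zero_mul]

theorem zT1' : α * (α * β) = 0 := by rw [← mul_assoc, rAAB]

theorem zT2 (t : Aa K k s a c) : γ * (α * (α * t)) = 0 := by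
  rw [← mul_assoc α α t, ← mul_assoc, rGAA, zero_mul]

theorem LA : α * ((α * β * γ) ^ (k - 1) * (α * β)) = 0 := by
  cases hkn : k - 1 with
  | zero =>
    simp only [pow_zero, one_mul]
    exact zT1'
  | succ m =>
    rw [pow_succ']
    simp only [mul_assoc]
    exact zT1 _

theorem bee2 : β * (η * η) = 0 := by
  calc β * (η * η) = (β * η) * η := by rw [mul_assoc]
    _ = ((α * β * γ) ^ (k - 1) * (α * β)) * η := by rw [rBE]
    _ = (α * β * γ) ^ (k - 1) * (α * (β * η)) := by simp only [mul_assoc]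
    _ = (α * β * γ) ^ (k - 1) * (α * ((α * β * γ) ^ (k - 1) * (α * β))) := by rw [rBE]
    _ = 0 := by rw [LA, mul_zero]

theorem bee2T (t : Aa K k s a c) : β * (η * (η * t)) = 0 := by
  have h : (β * (η * η)) * t = β * (η * (η * t)) := by simp only [mul_assoc]
  rw [← h, bee2, zero_mul]

theorem beS (hs : 3 ≤ s) : β * η ^ (s - 1) = 0 := by
  have hpow : (Et K k s a c) ^ (s - 1) = η * (η * η ^ (s - 3)) := by
    rw [← pow_succ', ← pow_succ']
    congr 1
    omega
  rw [hpow]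
  exact bee2T _

theorem beSS (hs : 3 ≤ s) : β * η ^ s = 0 := by
  have hpow : (Et K k s a c) ^ s = η * (η * η ^ (s - 2)) := by
    rw [← pow_succ', ← pow_succ']
    congr 1
    omega
  rw [hpow]
  exact bee2T _

theorem ee2g : η * (η * γ) = 0 := by
  conv_lhs => rw [rEG]
  cases hkn : k - 1 with
  | zero =>
    simp only [pow_zero, one_mul]
    rw [← mul_assoc, rEG, hkn]
    simp only [pow_zero, one_mul]
    rw [mul_assoc, rGAA]
  | succ m =>
    rw [pow_succ']
    simp only [mul_assoc]
    rw [← mul_assoc, rEG]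
    simp only [mul_assoc]
    rw [zT2, mul_zero]

theorem ee2gT (t : Aa K k s a c) : η * (η * (γ * t)) = 0 := by
  have h : (η * (η * γ)) * t = η * (η * (γ * t)) := by simp only [mul_assoc]
  rw [← h, ee2g, zero_mul]

theorem eSg (hs : 3 ≤ s) : η ^ (s - 1) * γ = 0 := by
  have hpow : (Et K k s a c) ^ (s - 1) = η ^ (s - 3) * η * η := by
    rw [← pow_succ, ← pow_succ]
    congr 1
    omega
  rw [hpow]
  simp only [mul_assoc]
  rw [ee2g, mul_zero]

theorem eSgT (hs : 3 ≤ s) (t : Aa K k s a c) : η ^ (s - 1) * (γ * t) = 0 := by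
  rw [← mul_assoc, eSg hs, zero_mul]

theorem WB (hs : 3 ≤ s) : Ω * β = 0 := by
  calc Ω * β = (β * γ * α) ^ (k - 1) * (β * (γ * β)) := by simp only [mul_assoc]
    _ = (β * γ * α) ^ (k - 1) * (β * η ^ (s - 1)) := by rw [rGB]
    _ = 0 := by rw [beS hs, mul_zero]

theorem GW (hs : 3 ≤ s) : γ * Ω = 0 := by
  cases hkn : k - 1 with
  | zero =>
    simp only [pow_zero, one_mul]
    rw [← mul_assoc, rGB, eSg hs]
  | succ m =>
    rw [pow_succ']
    simp only [mul_assoc]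
    rw [← mul_assoc, rGB]
    exact eSgT hs _

theorem BGW (hs : 3 ≤ s) : (β * γ) * Ω = 0 := by
  rw [mul_assoc, GW hs, mul_zero]

theorem ZZ (hk : 1 ≤ k) : (α * β * γ) ^ k = Zl := by
  calc (α * β * γ) ^ k = (α * β * γ) ^ (k - 1) * (α * β * γ) := by
        rw [← pow_succ, Nat.sub_add_cancel hk]
    _ = ((α * β * γ) ^ (k - 1) * (α * β)) * γ := by rw [← mul_assoc]
    _ = (β * η) * γ := by rw [← rBE]
    _ = β * ((γ * α * β) ^ (k - 1) * (γ * α)) := by rw [mul_assoc, rEG]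
    _ = (β * ((γ * α) * β) ^ (k - 1)) * (γ * α) := by rw [← mul_assoc]
    _ = ((β * (γ * α)) ^ (k - 1) * β) * (γ * α) := by rw [shuttle]
    _ = (β * (γ * α)) ^ (k - 1) * (β * (γ * α)) := by rw [mul_assoc]
    _ = (β * (γ * α)) ^ (k - 1 + 1) := by rw [← pow_succ]
    _ = (β * (γ * α)) ^ k := by rw [Nat.sub_add_cancel hk]
    _ = Zl := by rw [← mul_assoc]

theorem WA (hk : 1 ≤ k) : Ω * α = Zl := by
  calc Ω * α = (β * γ * α) ^ (k - 1) * (β * γ * α) := by simp only [mul_assoc]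
    _ = (β * γ * α) ^ (k - 1 + 1) := by rw [← pow_succ]
    _ = Zl := by rw [Nat.sub_add_cancel hk]

theorem AW (hk : 1 ≤ k) : α * Ω = Zl := by
  calc α * Ω = (α * ((β * γ) * α) ^ (k - 1)) * (β * γ) := by rw [← mul_assoc]
    _ = ((α * (β * γ)) ^ (k - 1) * α) * (β * γ) := by rw [shuttle]
    _ = (α * (β * γ)) ^ (k - 1) * (α * (β * γ)) := by rw [mul_assoc]
    _ = (α * (β * γ)) ^ (k - 1 + 1) := by rw [← pow_succ]
    _ = (α * β * γ) ^ k := by rw [Nat.sub_add_cancel hk, ← mul_assoc]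
    _ = Zl := ZZ hk

theorem ZA (hk : 1 ≤ k) : Zl * α = 0 := by
  have h : (Be K k s a c * Ga K k s a c * Al K k s a c) ^ k =
      (β * γ * α) ^ (k - 1) * (β * γ * α) := by
    rw [← pow_succ, Nat.sub_add_cancel hk]
  rw [h]
  simp only [mul_assoc]
  rw [rGAA, mul_zero, mul_zero]

theorem AZ (hk : 1 ≤ k) : α * Zl = 0 := by
  calc α * Zl = (α * (β * γ)) ^ k * α := shuttle _ _ _
    _ = (α * β * γ) ^ k * α := by rw [← mul_assoc]
    _ = Zl * α := by rw [ZZ hk]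
    _ = 0 := ZA hk

theorem WW (hs : 3 ≤ s) : Ω * Ω = 0 := by
  rw [mul_assoc, BGW hs, mul_zero]

theorem RK (hk : 1 ≤ k) (hs : 3 ≤ s) : (γ * α * β) ^ k = η ^ s := by
  calc (γ * α * β) ^ k = (γ * α * β) ^ (k - 1) * ((γ * α) * β) := by
        rw [← pow_succ, Nat.sub_add_cancel hk]
    _ = ((γ * α * β) ^ (k - 1) * (γ * α)) * β := by rw [← mul_assoc]
    _ = (η * γ) * β := by rw [← rEG]
    _ = η * η ^ (s - 1) := by rw [mul_assoc, rGB]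
    _ = η ^ (s - 1 + 1) := by rw [← pow_succ']
    _ = η ^ s := by rw [Nat.sub_add_cancel (by omega : 1 ≤ s)]

theorem ZB (hk : 1 ≤ k) (hs : 3 ≤ s) : Zl * β = 0 := by
  have h0 : (Be K k s a c * Ga K k s a c * Al K k s a c) ^ k = (β * (γ * α)) ^ k := by
    rw [← mul_assoc]
  calc Zl * β = (β * (γ * α)) ^ k * β := by rw [h0]
    _ = β * ((γ * α) * β) ^ k := (shuttle _ _ _).symm
    _ = β * η ^ s := by rw [RK hk hs]
    _ = 0 := beSS hs

theorem GZ (hk : 1 ≤ k) (hs : 3 ≤ s) : γ * Zl = 0 := by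
  rw [← WA hk, ← mul_assoc, GW hs, zero_mul]

theorem E1W : ε₁ * Ω = Ω := by
  cases hkn : k - 1 with
  | zero =>
    simp only [pow_zero, one_mul]
    rw [← mul_assoc, rE1B]
  | succ m =>
    rw [pow_succ']
    simp only [mul_assoc]
    rw [← mul_assoc, rE1B]

theorem WE1 : Ω * ε₁ = Ω := by
  calc Ω * ε₁ = (β * γ * α) ^ (k - 1) * (β * (γ * ε₁)) := by simp only [mul_assoc]
    _ = Ω := by rw [rGE1, mul_assoc]

theorem APsq (hk : 1 ≤ k) (hs : 3 ≤ s) (lam : K) :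
    (α + lam • Ω) * (α + lam • Ω) = a • Ω + (c + 2 * lam) • Zl := by
  simp only [mul_add, add_mul, smul_mul_assoc, mul_smul_comm, smul_smul]
  rw [rAA, AW hk, WA hk, WW hs]
  simp only [smul_zero, add_zero]
  module

theorem bgaShift (hs : 3 ≤ s) (lam : K) :
    β * γ * (α + lam • Ω) = β * γ * α := by
  rw [mul_add, mul_smul_comm, BGW hs, smul_zero, add_zero]

theorem abShift (hs : 3 ≤ s) (lam : K) :
    (α + lam • Ω) * β = α * β := by
  rw [add_mul, smul_mul_assoc, WB hs, smul_zero, add_zero]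

theorem gaShift (hs : 3 ≤ s) (lam : K) :
    γ * (α + lam • Ω) = γ * α := by
  rw [mul_add, mul_smul_comm, GW hs, smul_zero, add_zero]

end Derived
section Shift

variable (K : Type) [Field K] (k s : ℕ) (a c : K)

/-- images of the generators under the substitution α ↦ α + lam·(βγα)^{k-1}βγ -/
noncomputable def shiftGen (lam : K) : Gen → Aa K k s a c
  | Gen.e1 => E1 K k s a c
  | Gen.e2 => E2 K k s a c
  | Gen.al => Al K k s a c + lam • ((Be K k s a c * Ga K k s a c * Al K k s a c) ^ (k - 1) *
      (Be K k s a c * Ga K k s a c))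
  | Gen.be => Be K k s a c
  | Gen.ga => Ga K k s a c
  | Gen.et => Et K k s a c

noncomputable def shiftF (lam : K) : FreeAlgebra K Gen →ₐ[K] Aa K k s a c :=
  FreeAlgebra.lift K (shiftGen K k s a c lam)

theorem shiftF_rel (hk : 1 ≤ k) (hs : 3 ≤ s) (lam c' : K) (hc : c' = c + 2 * lam) :
    ∀ ⦃x y⦄, Rel K k s a c' x y →
      shiftF K k s a c lam x = shiftF K k s a c lam y := by
  intro x y h
  cases h <;>
    simp only [gen, map_mul, map_add, map_pow, map_smul, map_one, map_zero, shiftF,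
      FreeAlgebra.lift_ι_apply, shiftGen]
  case idem1 => exact r11
  case idem2 => exact r22
  case orth12 => exact r12
  case orth21 => exact r21
  case sum_idem => exact rSum
  case al_left => rw [mul_add, mul_smul_comm, rE1A, E1W]
  case al_right => rw [add_mul, smul_mul_assoc, rAE1, WE1]
  case be_left => exact rE1B
  case be_right => exact rBE2
  case ga_left => exact rE2G
  case ga_right => exact rGE1
  case et_left => exact rE2E
  case et_right => exact rEE2
  case rel_beta_eta => rw [abShift hs lam]; exact rBE
  case rel_eta_gamma => rw [gaShift hs lam]; exact rEG
  case rel_alpha_sq => rw [bgaShift hs lam, APsq hk hs lam, hc]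
  case rel_gamma_beta => exact rGB
  case rel_alpha_sq_beta =>
    rw [APsq hk hs lam, add_mul, smul_mul_assoc, smul_mul_assoc, WB hs, ZB hk hs,
      smul_zero, smul_zero, add_zero]
  case rel_gamma_alpha_sq =>
    rw [APsq hk hs lam, mul_add, mul_smul_comm, mul_smul_comm, GW hs, GZ hk hs,
      smul_zero, smul_zero, add_zero]

noncomputable def shiftHom (hk : 1 ≤ k) (hs : 3 ≤ s) (lam c' : K) (hc : c' = c + 2 * lam) :
    Aa K k s a c' →ₐ[K] Aa K k s a c :=
  RingQuot.liftAlgHom K ⟨shiftF K k s a c lam, shiftF_rel K k s a c hk hs lam c' hc⟩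

theorem shiftHom_apply_gen (hk : 1 ≤ k) (hs : 3 ≤ s) (lam c' : K) (hc : c' = c + 2 * lam)
    (gg : Gen) :
    shiftHom K k s a c hk hs lam c' hc (RingQuot.mkAlgHom K (Rel K k s a c') (gen K gg)) =
      shiftGen K k s a c lam gg := by
  simp only [shiftHom, gen, RingQuot.liftAlgHom_mkAlgHom_apply, shiftF,
    FreeAlgebra.lift_ι_apply]

end Shift

section ShiftMore

variable {K : Type} [Field K] {k s : ℕ} {a : K} (c : K)

theorem aaHom_ext {T : Type} [Semiring T] [Algebra K T]
    {r : FreeAlgebra K Gen → FreeAlgebra K Gen → Prop}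
    {f g : RingQuot r →ₐ[K] T}
    (h : ∀ gg : Gen, f (RingQuot.mkAlgHom K r (gen K gg)) = g (RingQuot.mkAlgHom K r (gen K gg))) :
    f = g := by
  have h1 : f.comp (RingQuot.mkAlgHom K r) = g.comp (RingQuot.mkAlgHom K r) := by
    apply FreeAlgebra.hom_ext
    funext gg
    exact h gg
  conv_lhs => rw [RingQuot.eq_liftAlgHom_comp_mkAlgHom K f]
  conv_rhs => rw [RingQuot.eq_liftAlgHom_comp_mkAlgHom K g]
  exact congrArg _ (Subtype.ext h1)

end ShiftMore
section ShiftEquiv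

variable {K : Type} [Field K] {k s : ℕ} {a : K}

theorem genE1 (c : K) : RingQuot.mkAlgHom K (Rel K k s a c) (gen K Gen.e1) = E1 K k s a c := rfl
theorem genE2 (c : K) : RingQuot.mkAlgHom K (Rel K k s a c) (gen K Gen.e2) = E2 K k s a c := rfl
theorem genAl (c : K) : RingQuot.mkAlgHom K (Rel K k s a c) (gen K Gen.al) = Al K k s a c := rfl
theorem genBe (c : K) : RingQuot.mkAlgHom K (Rel K k s a c) (gen K Gen.be) = Be K k s a c := rfl
theorem genGa (c : K) : RingQuot.mkAlgHom K (Rel K k s a c) (gen K Gen.ga) = Ga K k s a c := rfl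
theorem genEt (c : K) : RingQuot.mkAlgHom K (Rel K k s a c) (gen K Gen.et) = Et K k s a c := rfl

theorem shiftHom_Al (c : K) (hk : 1 ≤ k) (hs : 3 ≤ s) (lam c' : K) (hc : c' = c + 2 * lam) :
    shiftHom K k s a c hk hs lam c' hc (Al K k s a c') =
      Al K k s a c + lam • ((Be K k s a c * Ga K k s a c * Al K k s a c) ^ (k - 1) *
        (Be K k s a c * Ga K k s a c)) := by
  rw [← genAl c', shiftHom_apply_gen]; rfl

theorem shiftHom_Be (c : K) (hk : 1 ≤ k) (hs : 3 ≤ s) (lam c' : K) (hc : c' = c + 2 * lam) :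
    shiftHom K k s a c hk hs lam c' hc (Be K k s a c') = Be K k s a c := by
  rw [← genBe c', shiftHom_apply_gen]; rfl

theorem shiftHom_Ga (c : K) (hk : 1 ≤ k) (hs : 3 ≤ s) (lam c' : K) (hc : c' = c + 2 * lam) :
    shiftHom K k s a c hk hs lam c' hc (Ga K k s a c') = Ga K k s a c := by
  rw [← genGa c', shiftHom_apply_gen]; rfl

theorem shiftHom_Et (c : K) (hk : 1 ≤ k) (hs : 3 ≤ s) (lam c' : K) (hc : c' = c + 2 * lam) :
    shiftHom K k s a c hk hs lam c' hc (Et K k s a c') = Et K k s a c := by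
  rw [← genEt c', shiftHom_apply_gen]; rfl

theorem shiftHom_E1 (c : K) (hk : 1 ≤ k) (hs : 3 ≤ s) (lam c' : K) (hc : c' = c + 2 * lam) :
    shiftHom K k s a c hk hs lam c' hc (E1 K k s a c') = E1 K k s a c := by
  rw [← genE1 c', shiftHom_apply_gen]; rfl

theorem shiftHom_E2 (c : K) (hk : 1 ≤ k) (hs : 3 ≤ s) (lam c' : K) (hc : c' = c + 2 * lam) :
    shiftHom K k s a c hk hs lam c' hc (E2 K k s a c') = E2 K k s a c := by
  rw [← genE2 c', shiftHom_apply_gen]; rfl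

theorem shiftHom_W (c : K) (hk : 1 ≤ k) (hs : 3 ≤ s) (lam c' : K) (hc : c' = c + 2 * lam) :
    shiftHom K k s a c hk hs lam c' hc
        ((Be K k s a c' * Ga K k s a c' * Al K k s a c') ^ (k - 1) *
          (Be K k s a c' * Ga K k s a c')) =
      (Be K k s a c * Ga K k s a c * Al K k s a c) ^ (k - 1) *
        (Be K k s a c * Ga K k s a c) := by
  simp only [map_mul, map_pow, shiftHom_Al c hk hs lam c' hc, shiftHom_Be c hk hs lam c' hc,
    shiftHom_Ga c hk hs lam c' hc]
  rw [bgaShift hs lam]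

/-- `A^{k,s}(a,c)` is isomorphic to `A^{k,s}(a,0)`. -/
noncomputable def shiftEquiv (c : K) (hk : 1 ≤ k) (hs : 3 ≤ s) (h2 : (2 : K) ≠ 0) :
    Aa K k s a c ≃ₐ[K] Aa K k s a 0 := by
  have hc1 : c = 0 + 2 * (c / 2) := by
    rw [zero_add, mul_comm, div_mul_cancel₀ _ h2]
  have hc2 : (0 : K) = c + 2 * (-(c / 2)) := by
    rw [mul_neg, ← sub_eq_add_neg, mul_comm, div_mul_cancel₀ _ h2, sub_self]
  refine AlgEquiv.ofAlgHom (shiftHom K k s a 0 hk hs (c / 2) c hc1)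
    (shiftHom K k s a c hk hs (-(c / 2)) 0 hc2) ?_ ?_
  · apply aaHom_ext
    intro gg
    simp only [AlgHom.comp_apply, AlgHom.id_apply]
    cases gg
    case e1 => simp only [genE1, shiftHom_E1]
    case e2 => simp only [genE2, shiftHom_E2]
    case be => simp only [genBe, shiftHom_Be]
    case ga => simp only [genGa, shiftHom_Ga]
    case et => simp only [genEt, shiftHom_Et]
    case al =>
      rw [genAl, shiftHom_Al, map_add, map_smul, shiftHom_Al, shiftHom_W]
      module
  · apply aaHom_ext
    intro gg
    simp only [AlgHom.comp_apply, AlgHom.id_apply]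
    cases gg
    case e1 => simp only [genE1, shiftHom_E1]
    case e2 => simp only [genE2, shiftHom_E2]
    case be => simp only [genBe, shiftHom_Be]
    case ga => simp only [genGa, shiftHom_Ga]
    case et => simp only [genEt, shiftHom_Et]
    case al =>
      rw [genAl, shiftHom_Al, map_add, map_smul, shiftHom_Al, shiftHom_W]
      module

end ShiftEquiv
section Scale

variable (K : Type) [Field K] (k s : ℕ) (a : K)

noncomputable def scaleGen (u v w x : K) : Gen → Aa K k s a 0
  | Gen.e1 => E1 K k s a 0
  | Gen.e2 => E2 K k s a 0
  | Gen.al => u • Al K k s a 0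
  | Gen.be => v • Be K k s a 0
  | Gen.ga => w • Ga K k s a 0
  | Gen.et => x • Et K k s a 0

noncomputable def scaleF (u v w x : K) : FreeAlgebra K Gen →ₐ[K] Aa K k s a 0 :=
  FreeAlgebra.lift K (scaleGen K k s a u v w x)

theorem scaleF_rel (hk : 1 ≤ k) (hs : 3 ≤ s) (b u v w x : K)
    (h1 : x = u * (u * v * w) ^ (k - 1))
    (h2 : w * v = x ^ (s - 1))
    (h3 : u * u * a = b * ((u * v * w) ^ (k - 1) * (v * w))) :
    ∀ ⦃p q⦄, Rel K k s b 0 p q →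
      scaleF K k s a u v w x p = scaleF K k s a u v w x q := by
  intro p q h
  cases h <;>
    simp only [gen, map_mul, map_add, map_pow, map_smul, map_one, map_zero, scaleF,
      FreeAlgebra.lift_ι_apply, scaleGen]
  case idem1 => exact r11
  case idem2 => exact r22
  case orth12 => exact r12
  case orth21 => exact r21
  case sum_idem => exact rSum
  case al_left => rw [mul_smul_comm, rE1A]
  case al_right => rw [smul_mul_assoc, rAE1]
  case be_left => rw [mul_smul_comm, rE1B]
  case be_right => rw [smul_mul_assoc, rBE2]
  case ga_left => rw [mul_smul_comm, rE2G]
  case ga_right => rw [smul_mul_assoc, rGE1]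
  case et_left => rw [mul_smul_comm, rE2E]
  case et_right => rw [smul_mul_assoc, rEE2]
  case rel_beta_eta =>
    simp only [smul_mul_assoc, mul_smul_comm, smul_smul, smul_pow]
    rw [rBE]
    congr 1
    rw [h1]
    ring
  case rel_eta_gamma =>
    simp only [smul_mul_assoc, mul_smul_comm, smul_smul, smul_pow]
    rw [rEG]
    congr 1
    rw [h1]
    ring
  case rel_alpha_sq =>
    simp only [smul_mul_assoc, mul_smul_comm, smul_smul, smul_pow, zero_smul, smul_zero,
      add_zero, zero_mul, mul_zero]
    rw [rAA]
    simp only [smul_add, smul_smul, zero_smul, add_zero, zero_mul, mul_zero, smul_zero]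
    congr 1
    linear_combination h3
  case rel_gamma_beta =>
    simp only [smul_mul_assoc, mul_smul_comm, smul_smul, smul_pow]
    rw [rGB]
    congr 1
    linear_combination h2
  case rel_alpha_sq_beta =>
    simp only [smul_mul_assoc, mul_smul_comm, smul_smul]
    rw [rAAB, smul_zero]
  case rel_gamma_alpha_sq =>
    simp only [smul_mul_assoc, mul_smul_comm, smul_smul]
    rw [rGAA, smul_zero]

noncomputable def scaleHom (hk : 1 ≤ k) (hs : 3 ≤ s) (b u v w x : K)
    (h1 : x = u * (u * v * w) ^ (k - 1))
    (h2 : w * v = x ^ (s - 1))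
    (h3 : u * u * a = b * ((u * v * w) ^ (k - 1) * (v * w))) :
    Aa K k s b 0 →ₐ[K] Aa K k s a 0 :=
  RingQuot.liftAlgHom K ⟨scaleF K k s a u v w x,
    scaleF_rel K k s a hk hs b u v w x h1 h2 h3⟩

theorem scaleHom_apply_gen (hk : 1 ≤ k) (hs : 3 ≤ s) (b u v w x : K)
    (h1 : x = u * (u * v * w) ^ (k - 1))
    (h2 : w * v = x ^ (s - 1))
    (h3 : u * u * a = b * ((u * v * w) ^ (k - 1) * (v * w))) (gg : Gen) :
    scaleHom K k s a hk hs b u v w x h1 h2 h3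
        (RingQuot.mkAlgHom K (Rel K k s b 0) (gen K gg)) =
      scaleGen K k s a u v w x gg := by
  simp only [scaleHom, gen, RingQuot.liftAlgHom_mkAlgHom_apply, scaleF,
    FreeAlgebra.lift_ι_apply]

end Scale
section ScaleEquiv

variable {K : Type} [Field K] {k s : ℕ} {a : K}

theorem scaleHom_Al (hk : 1 ≤ k) (hs : 3 ≤ s) (b u v w x : K)
    (h1 : x = u * (u * v * w) ^ (k - 1)) (h2 : w * v = x ^ (s - 1))
    (h3 : u * u * a = b * ((u * v * w) ^ (k - 1) * (v * w))) :
    scaleHom K k s a hk hs b u v w x h1 h2 h3 (Al K k s b 0) = u • Al K k s a 0 := by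
  rw [← genAl (a := b) 0, scaleHom_apply_gen]; rfl

theorem scaleHom_Be (hk : 1 ≤ k) (hs : 3 ≤ s) (b u v w x : K)
    (h1 : x = u * (u * v * w) ^ (k - 1)) (h2 : w * v = x ^ (s - 1))
    (h3 : u * u * a = b * ((u * v * w) ^ (k - 1) * (v * w))) :
    scaleHom K k s a hk hs b u v w x h1 h2 h3 (Be K k s b 0) = v • Be K k s a 0 := by
  rw [← genBe (a := b) 0, scaleHom_apply_gen]; rfl

theorem scaleHom_Ga (hk : 1 ≤ k) (hs : 3 ≤ s) (b u v w x : K)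
    (h1 : x = u * (u * v * w) ^ (k - 1)) (h2 : w * v = x ^ (s - 1))
    (h3 : u * u * a = b * ((u * v * w) ^ (k - 1) * (v * w))) :
    scaleHom K k s a hk hs b u v w x h1 h2 h3 (Ga K k s b 0) = w • Ga K k s a 0 := by
  rw [← genGa (a := b) 0, scaleHom_apply_gen]; rfl

theorem scaleHom_Et (hk : 1 ≤ k) (hs : 3 ≤ s) (b u v w x : K)
    (h1 : x = u * (u * v * w) ^ (k - 1)) (h2 : w * v = x ^ (s - 1))
    (h3 : u * u * a = b * ((u * v * w) ^ (k - 1) * (v * w))) :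
    scaleHom K k s a hk hs b u v w x h1 h2 h3 (Et K k s b 0) = x • Et K k s a 0 := by
  rw [← genEt (a := b) 0, scaleHom_apply_gen]; rfl

theorem scaleHom_E1 (hk : 1 ≤ k) (hs : 3 ≤ s) (b u v w x : K)
    (h1 : x = u * (u * v * w) ^ (k - 1)) (h2 : w * v = x ^ (s - 1))
    (h3 : u * u * a = b * ((u * v * w) ^ (k - 1) * (v * w))) :
    scaleHom K k s a hk hs b u v w x h1 h2 h3 (E1 K k s b 0) = E1 K k s a 0 := by
  rw [← genE1 (a := b) 0, scaleHom_apply_gen]; rfl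

theorem scaleHom_E2 (hk : 1 ≤ k) (hs : 3 ≤ s) (b u v w x : K)
    (h1 : x = u * (u * v * w) ^ (k - 1)) (h2 : w * v = x ^ (s - 1))
    (h3 : u * u * a = b * ((u * v * w) ^ (k - 1) * (v * w))) :
    scaleHom K k s a hk hs b u v w x h1 h2 h3 (E2 K k s b 0) = E2 K k s a 0 := by
  rw [← genE2 (a := b) 0, scaleHom_apply_gen]; rfl

/-- rescaling the generators gives an isomorphism `A^{k,s}(a,0) ≅ A^{k,s}(1,0)`. -/
noncomputable def scaleEquiv (hk : 1 ≤ k) (hs : 3 ≤ s) (u v w x u' v' w' x' : K)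
    (h1 : x = u * (u * v * w) ^ (k - 1)) (h2 : w * v = x ^ (s - 1))
    (h3 : u * u * 1 = a * ((u * v * w) ^ (k - 1) * (v * w)))
    (h1' : x' = u' * (u' * v' * w') ^ (k - 1)) (h2' : w' * v' = x' ^ (s - 1))
    (h3' : u' * u' * a = 1 * ((u' * v' * w') ^ (k - 1) * (v' * w')))
    (hu : u * u' = 1) (hv : v * v' = 1) (hw : w * w' = 1) (hx : x * x' = 1) :
    Aa K k s a 0 ≃ₐ[K] Aa K k s 1 0 := by
  refine AlgEquiv.ofAlgHom (scaleHom K k s 1 hk hs a u v w x h1 h2 h3)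
    (scaleHom K k s a hk hs 1 u' v' w' x' h1' h2' h3') ?_ ?_
  · apply aaHom_ext
    intro gg
    simp only [AlgHom.comp_apply, AlgHom.id_apply]
    cases gg
    case e1 => simp only [genE1, scaleHom_E1]
    case e2 => simp only [genE2, scaleHom_E2]
    case al =>
      simp only [genAl, scaleHom_Al, map_smul, smul_smul]
      rw [mul_comm u' u, hu, one_smul]
    case be =>
      simp only [genBe, scaleHom_Be, map_smul, smul_smul]
      rw [mul_comm v' v, hv, one_smul]
    case ga =>
      simp only [genGa, scaleHom_Ga, map_smul, smul_smul]
      rw [mul_comm w' w, hw, one_smul]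
    case et =>
      simp only [genEt, scaleHom_Et, map_smul, smul_smul]
      rw [mul_comm x' x, hx, one_smul]
  · apply aaHom_ext
    intro gg
    simp only [AlgHom.comp_apply, AlgHom.id_apply]
    cases gg
    case e1 => simp only [genE1, scaleHom_E1]
    case e2 => simp only [genE2, scaleHom_E2]
    case al =>
      simp only [genAl, scaleHom_Al, map_smul, smul_smul]
      rw [hu, one_smul]
    case be =>
      simp only [genBe, scaleHom_Be, map_smul, smul_smul]
      rw [hv, one_smul]
    case ga =>
      simp only [genGa, scaleHom_Ga, map_smul, smul_smul]
      rw [hw, one_smul]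
    case et =>
      simp only [genEt, scaleHom_Et, map_smul, smul_smul]
      rw [hx, one_smul]

end ScaleEquiv
section Exists

theorem exists_scale_data {K : Type} [Field K] [IsAlgClosed K] {k s : ℕ} (hk : 1 ≤ k)
    (hs : 3 ≤ s) {a : K} (ha : a ≠ 0) (hne : ¬(k = 1 ∧ s = 3)) :
    ∃ u v w x u' v' w' x' : K,
      (x = u * (u * v * w) ^ (k - 1)) ∧ (w * v = x ^ (s - 1)) ∧
      (u * u * 1 = a * ((u * v * w) ^ (k - 1) * (v * w))) ∧
      (x' = u' * (u' * v' * w') ^ (k - 1)) ∧ (w' * v' = x' ^ (s - 1)) ∧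
      (u' * u' * a = 1 * ((u' * v' * w') ^ (k - 1) * (v' * w'))) ∧
      (u * u' = 1) ∧ (v * v' = 1) ∧ (w * w' = 1) ∧ (x * x' = 1) := by
  obtain ⟨D, hD⟩ : ∃ D : ℤ, D = (((s - 1 : ℕ) : ℤ) + 1) * (((k - 1 : ℕ) : ℤ) + 1) - 3 * (1 - ((k - 1 : ℕ) : ℤ) * ((s - 1 : ℕ) : ℤ)) := ⟨_, rfl⟩
  have hDval : D = 4 * (k : ℤ) * (s : ℤ) - 3 * (k : ℤ) - 3 * (s : ℤ) := by
    have h1 : ((k - 1 : ℕ) : ℤ) = (k : ℤ) - 1 := by omega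
    have h2 : ((s - 1 : ℕ) : ℤ) = (s : ℤ) - 1 := by omega
    rw [hD, h1, h2]
    ring
  have hDpos : 0 < D := by
    rcases eq_or_lt_of_le hk with hk1 | hk2
    · have hs3 : s ≠ 3 := fun h3 => hne ⟨hk1.symm, h3⟩
      have hs4 : (4 : ℤ) ≤ (s : ℤ) := by omega
      have hk1' : (k : ℤ) = 1 := by omega
      rw [hDval, hk1']
      linarith
    · have h2k : (2 : ℤ) ≤ (k : ℤ) := by exact_mod_cast hk2
      have h3s : (3 : ℤ) ≤ (s : ℤ) := by exact_mod_cast hs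
      rw [hDval]
      nlinarith [mul_nonneg (by linarith : (0 : ℤ) ≤ (k : ℤ) - 2)
        (by linarith : (0 : ℤ) ≤ 4 * (s : ℤ) - 3)]
  have hDn : ((D.toNat : ℕ) : ℤ) = D := Int.toNat_of_nonneg hDpos.le
  have hDnpos : 0 < D.toNat := by omega
  obtain ⟨r, hr⟩ := IsAlgClosed.exists_pow_nat_eq a hDnpos
  have hrne : r ≠ 0 := by
    rintro rfl
    exact ha (by rw [← hr, zero_pow (by omega)])
  have hmul : ∀ i j : ℤ, r ^ i * r ^ j = r ^ (i + j) := fun i j => (zpow_add₀ hrne i j).symm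
  have hp : ∀ (i : ℤ) (n : ℕ), (r ^ i) ^ n = r ^ (i * (n : ℤ)) := by
    intro i n
    induction n with
    | zero => simp
    | succ t ih =>
      rw [pow_succ, ih, hmul]
      congr 1
      push_cast
      ring
  have ha' : a = r ^ ((D.toNat : ℕ) : ℤ) := by rw [zpow_natCast, hr]
  refine ⟨r ^ (-(1 - ((k - 1 : ℕ) : ℤ) * ((s - 1 : ℕ) : ℤ))), r ^ ((1 - ((k - 1 : ℕ) : ℤ) * ((s - 1 : ℕ) : ℤ)) - (((s - 1 : ℕ) : ℤ) + 1)), 1, r ^ (-(1 - ((k - 1 : ℕ) : ℤ) * ((s - 1 : ℕ) : ℤ)) - (((s - 1 : ℕ) : ℤ) + 1) * ((k - 1 : ℕ) : ℤ)),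
      r ^ (1 - ((k - 1 : ℕ) : ℤ) * ((s - 1 : ℕ) : ℤ)), r ^ ((((s - 1 : ℕ) : ℤ) + 1) - (1 - ((k - 1 : ℕ) : ℤ) * ((s - 1 : ℕ) : ℤ))), 1, r ^ ((1 - ((k - 1 : ℕ) : ℤ) * ((s - 1 : ℕ) : ℤ)) + (((s - 1 : ℕ) : ℤ) + 1) * ((k - 1 : ℕ) : ℤ)), ?_, ?_, ?_, ?_, ?_, ?_, ?_, ?_, ?_, ?_⟩
  · simp only [mul_one, one_mul, hmul, hp]
    congr 1
    ring
  · simp only [mul_one, one_mul, hmul, hp]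
    congr 1
    ring
  · rw [ha']
    simp only [mul_one, one_mul, hmul, hp]
    congr 1
    rw [hDn, hD]
    ring
  · simp only [mul_one, one_mul, hmul, hp]
    congr 1
    ring
  · simp only [mul_one, one_mul, hmul, hp]
    congr 1
    ring
  · rw [ha']
    simp only [mul_one, one_mul, hmul, hp]
    congr 1
    rw [hDn, hD]
    ring
  · rw [hmul, show -(1 - ((k - 1 : ℕ) : ℤ) * ((s - 1 : ℕ) : ℤ)) + (1 - ((k - 1 : ℕ) : ℤ) * ((s - 1 : ℕ) : ℤ)) = (0 : ℤ) from by ring]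
    exact zpow_zero r
  · rw [hmul, show (1 - ((k - 1 : ℕ) : ℤ) * ((s - 1 : ℕ) : ℤ)) - (((s - 1 : ℕ) : ℤ) + 1) + ((((s - 1 : ℕ) : ℤ) + 1) - (1 - ((k - 1 : ℕ) : ℤ) * ((s - 1 : ℕ) : ℤ))) = (0 : ℤ) from by ring]
    exact zpow_zero r
  · exact one_mul 1
  · rw [hmul, show -(1 - ((k - 1 : ℕ) : ℤ) * ((s - 1 : ℕ) : ℤ)) - (((s - 1 : ℕ) : ℤ) + 1) * ((k - 1 : ℕ) : ℤ) + ((1 - ((k - 1 : ℕ) : ℤ) * ((s - 1 : ℕ) : ℤ)) + (((s - 1 : ℕ) : ℤ) + 1) * ((k - 1 : ℕ) : ℤ)) = (0 : ℤ) from by ring]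
    exact zpow_zero r

end Exists
end QT



open QT in
/-- If K is algebraically closed of characteristic different from 2,
then there exists a nonzero a' ∈ K with A^{k,s}(a,c) ≅ A^{k,s}(a',0) as K-algebras;
if moreover (k,s) ≠ (1,3), then A^{k,s}(a,c) ≅ A^{k,s}(1,0). -/
theorem statement7 (K : Type) [Field K] [IsAlgClosed K] (hchar : ringChar K ≠ 2)
    (k s : ℕ) (hk : 1 ≤ k) (hs : 3 ≤ s) (a c : K) (ha : a ≠ 0) :
    (∃ a' : K, a' ≠ 0 ∧ Nonempty (Aa K k s a c ≃ₐ[K] Aa K k s a' 0)) ∧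
      ((k, s) ≠ (1, 3) → Nonempty (Aa K k s a c ≃ₐ[K] Aa K k s 1 0)) := by
  have h2 : (2 : K) ≠ 0 := Ring.two_ne_zero hchar
  constructor
  · exact ⟨a, ha, ⟨shiftEquiv c hk hs h2⟩⟩
  · intro hne
    have hne' : ¬(k = 1 ∧ s = 3) := by
      rintro ⟨hh1, hh2⟩
      exact hne (by rw [hh1, hh2])
    obtain ⟨u, v, w, x, u', v', w', x', e1, e2, e3, e1', e2', e3', hu, hv, hw, hx⟩ :=
      exists_scale_data hk hs ha hne'
    exact ⟨(shiftEquiv c hk hs h2).trans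
      (scaleEquiv hk hs u v w x u' v' w' x' e1 e2 e3 e1' e2' e3' hu hv hw hx)⟩
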